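/- arXiv:1412.2130 — 8 statements merged into one kernel-verified Lean document; each statement's English description precedes it below -/
import Mathlib

section
/- Let x(u,v) and y(u,v) be the real and imaginary parts of a Weierstrass minimal curve Ψ generated by holomorphic f, g. Then by the Cauchy–Riemann equations x_u = y_v and x_v = −y_u, and hence for every real t the associated surface assoc_t(u,v) = x(u,v)cos t + y(u,v)sin t has the same first fundamental form coefficients as x: E_t = E₀, F_t = F₀, G_t = G₀. -/
/-!
The Weierstrass data is isotropic: `φ = Ψ'` satisfies `φ₁² + φ₂² + φ₃² = 0`. Taking real and
imaginary parts, `Σ (Re φₖ)² = Σ (Im φₖ)² = ‖φ‖² / 2` and `Σ Re φₖ Im φₖ = 0`. By the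
Cauchy–Riemann equations `x_u = Re φ` and `x_v = -Im φ`, so the chart `x = Re Ψ` is conformal with
`E = G = ‖φ‖² / 2`, `F = 0`. The member `x cos t + y sin t = Re (e^{-it} Ψ)` of the associated
family is the real part of the curve with isotropic derivative `e^{-it} φ`, which has the same norm.
-/

open Complex

theorem HasDerivAt.re {F : ℝ → ℂ} {d : ℂ} {p : ℝ} (H : HasDerivAt F d p) :
    HasDerivAt (fun s => (F s).re) d.re p := by
  simpa [Function.comp_def] using reCLM.hasFDerivAt.comp_hasDerivAt p H

theorem HasDerivAt.im {F : ℝ → ℂ} {d : ℂ} {p : ℝ} (H : HasDerivAt F d p) :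
    HasDerivAt (fun s => (F s).im) d.im p := by
  simpa [Function.comp_def] using imCLM.hasFDerivAt.comp_hasDerivAt p H

section CauchyRiemann

variable {h : ℂ → ℂ} {d : ℂ} {u v : ℝ}

theorem HasDerivAt.comp_horizontal_line (H : HasDerivAt h d (u + v * I)) :
    HasDerivAt (fun s : ℝ => h (s + v * I)) d u := by
  have : HasDerivAt (fun w : ℂ => h (w + v * I)) d u := by
    simpa using H.comp_add_const (u : ℂ) (v * I)
  exact this.comp_ofReal

theorem HasDerivAt.comp_vertical_line (H : HasDerivAt h d (u + v * I)) :
    HasDerivAt (fun s : ℝ => h (u + s * I)) (d * I) v := by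
  have : HasDerivAt (fun w : ℂ => h (u + w * I)) (d * I) v :=
    H.comp (v : ℂ) ((hasDerivAt_mul_const I).const_add (u : ℂ))
  exact this.comp_ofReal

theorem deriv_re_horizontal (H : HasDerivAt h d (u + v * I)) :
    deriv (fun s : ℝ => (h (s + v * I)).re) u = d.re :=
  H.comp_horizontal_line.re.deriv

theorem deriv_im_horizontal (H : HasDerivAt h d (u + v * I)) :
    deriv (fun s : ℝ => (h (s + v * I)).im) u = d.im :=
  H.comp_horizontal_line.im.deriv

theorem deriv_re_vertical (H : HasDerivAt h d (u + v * I)) :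
    deriv (fun s : ℝ => (h (u + s * I)).re) v = -d.im := by
  simpa using H.comp_vertical_line.re.deriv

theorem deriv_im_vertical (H : HasDerivAt h d (u + v * I)) :
    deriv (fun s : ℝ => (h (u + s * I)).im) v = d.re := by
  simpa using H.comp_vertical_line.im.deriv

end CauchyRiemann

theorem exp_ofReal_neg_mul_I_mul_re (t : ℝ) (w : ℂ) :
    (cexp (↑(-t) * I) * w).re = w.re * Real.cos t + w.im * Real.sin t := by
  rw [mul_re, exp_ofReal_mul_I_re, exp_ofReal_mul_I_im, Real.cos_neg, Real.sin_neg]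
  ring

theorem weierstrass_data_isotropic (f g : ℂ) :
    ((1 / 2) * f * (1 - g ^ 2)) ^ 2 + ((I / 2) * f * (1 + g ^ 2)) ^ 2 + (f * g) ^ 2 = 0 := by
  linear_combination (f ^ 2 * (1 + g ^ 2) ^ 2 / 4) * I_sq

section Isotropic

variable {a b c : ℂ}

theorem re_mul_im_add_eq_zero_of_isotropic (hnull : a ^ 2 + b ^ 2 + c ^ 2 = 0) :
    a.re * a.im + b.re * b.im + c.re * c.im = 0 := by
  have := congrArg Complex.im hnull
  simp only [pow_two, add_im, mul_im, zero_im] at this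
  linarith

theorem re_mul_re_add_eq_half_normSq_of_isotropic (hnull : a ^ 2 + b ^ 2 + c ^ 2 = 0) :
    a.re * a.re + b.re * b.re + c.re * c.re = (normSq a + normSq b + normSq c) / 2 := by
  have := congrArg Complex.re hnull
  simp only [pow_two, add_re, mul_re, zero_re] at this
  simp only [normSq_apply]
  linarith

theorem im_mul_im_add_eq_half_normSq_of_isotropic (hnull : a ^ 2 + b ^ 2 + c ^ 2 = 0) :
    a.im * a.im + b.im * b.im + c.im * c.im = (normSq a + normSq b + normSq c) / 2 := by
  have := congrArg Complex.re hnull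
  simp only [pow_two, add_re, mul_re, zero_re] at this
  simp only [normSq_apply]
  linarith

theorem isotropic_mul (hnull : a ^ 2 + b ^ 2 + c ^ 2 = 0) (w : ℂ) :
    (w * a) ^ 2 + (w * b) ^ 2 + (w * c) ^ 2 = 0 := by
  linear_combination w ^ 2 * hnull

theorem re_mul_im_add_mul_left_of_isotropic (hnull : a ^ 2 + b ^ 2 + c ^ 2 = 0) (w : ℂ) :
    (w * a).re * (w * a).im + (w * b).re * (w * b).im + (w * c).re * (w * c).im =
      a.re * a.im + b.re * b.im + c.re * c.im := by
  rw [re_mul_im_add_eq_zero_of_isotropic (isotropic_mul hnull w),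
    re_mul_im_add_eq_zero_of_isotropic hnull]

variable {w : ℂ}

theorem re_mul_re_add_mul_left_of_isotropic (hnull : a ^ 2 + b ^ 2 + c ^ 2 = 0)
    (hw : normSq w = 1) :
    (w * a).re * (w * a).re + (w * b).re * (w * b).re + (w * c).re * (w * c).re =
      a.re * a.re + b.re * b.re + c.re * c.re := by
  rw [re_mul_re_add_eq_half_normSq_of_isotropic (isotropic_mul hnull w),
    re_mul_re_add_eq_half_normSq_of_isotropic hnull, normSq_mul, normSq_mul, normSq_mul, hw]
  ring

theorem im_mul_im_add_mul_left_of_isotropic (hnull : a ^ 2 + b ^ 2 + c ^ 2 = 0)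
    (hw : normSq w = 1) :
    (w * a).im * (w * a).im + (w * b).im * (w * b).im + (w * c).im * (w * c).im =
      a.im * a.im + b.im * b.im + c.im * c.im := by
  rw [im_mul_im_add_eq_half_normSq_of_isotropic (isotropic_mul hnull w),
    im_mul_im_add_eq_half_normSq_of_isotropic hnull, normSq_mul, normSq_mul, normSq_mul, hw]
  ring

end Isotropic

theorem associated_family_same_first_fundamental_form_general
    (f g : ℂ → ℂ)
    (Ψ₁ Ψ₂ Ψ₃ : ℂ → ℂ)
    (hΨ₁ : ∀ z : ℂ, HasDerivAt Ψ₁ ((1 / 2 : ℂ) * f z * (1 - (g z) ^ 2)) z)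
    (hΨ₂ : ∀ z : ℂ, HasDerivAt Ψ₂ ((Complex.I / 2) * f z * (1 + (g z) ^ 2)) z)
    (hΨ₃ : ∀ z : ℂ, HasDerivAt Ψ₃ (f z * g z) z)
    -- the conjugate minimal surfaces `x = Re Ψ` and `y = Im Ψ`
    (x y : ℝ → ℝ → ℝ × ℝ × ℝ)
    (hx : ∀ u v : ℝ, x u v =
      ((Ψ₁ (u + v * Complex.I)).re, (Ψ₂ (u + v * Complex.I)).re,
        (Ψ₃ (u + v * Complex.I)).re))
    (hy : ∀ u v : ℝ, y u v =
      ((Ψ₁ (u + v * Complex.I)).im, (Ψ₂ (u + v * Complex.I)).im,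
        (Ψ₃ (u + v * Complex.I)).im)) :
    ∀ u v : ℝ,
      -- Cauchy–Riemann equations, componentwise
      (deriv (fun s => (x s v).1) u = deriv (fun s => (y u s).1) v ∧
       deriv (fun s => (x s v).2.1) u = deriv (fun s => (y u s).2.1) v ∧
       deriv (fun s => (x s v).2.2) u = deriv (fun s => (y u s).2.2) v) ∧
      (deriv (fun s => (x u s).1) v = -deriv (fun s => (y s v).1) u ∧
       deriv (fun s => (x u s).2.1) v = -deriv (fun s => (y s v).2.1) u ∧
       deriv (fun s => (x u s).2.2) v = -deriv (fun s => (y s v).2.2) u) ∧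
      -- equality of first fundamental forms along the associated family
      (∀ t : ℝ,
        let assoc : ℝ → ℝ → ℝ × ℝ × ℝ := fun u v =>
          ((x u v).1 * Real.cos t + (y u v).1 * Real.sin t,
           (x u v).2.1 * Real.cos t + (y u v).2.1 * Real.sin t,
           (x u v).2.2 * Real.cos t + (y u v).2.2 * Real.sin t)
        let ru : (ℝ → ℝ → ℝ × ℝ × ℝ) → ℝ × ℝ × ℝ := fun r =>
          (deriv (fun s => (r s v).1) u, deriv (fun s => (r s v).2.1) u,
            deriv (fun s => (r s v).2.2) u)
        let rv : (ℝ → ℝ → ℝ × ℝ × ℝ) → ℝ × ℝ × ℝ := fun r =>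
          (deriv (fun s => (r u s).1) v, deriv (fun s => (r u s).2.1) v,
            deriv (fun s => (r u s).2.2) v)
        let dot : ℝ × ℝ × ℝ → ℝ × ℝ × ℝ → ℝ := fun p q =>
          p.1 * q.1 + p.2.1 * q.2.1 + p.2.2 * q.2.2
        dot (ru assoc) (ru assoc) = dot (ru x) (ru x) ∧
        dot (ru assoc) (rv assoc) = dot (ru x) (rv x) ∧
        dot (rv assoc) (rv assoc) = dot (rv x) (rv x)) := by
  intro u v
  have H₁ := hΨ₁ (u + v * I)
  have H₂ := hΨ₂ (u + v * I)
  have H₃ := hΨ₃ (u + v * I)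
  simp only [hx, hy]
  refine ⟨?_, ?_, fun t => ?_⟩
  · exact ⟨(deriv_re_horizontal H₁).trans (deriv_im_vertical H₁).symm,
      (deriv_re_horizontal H₂).trans (deriv_im_vertical H₂).symm,
      (deriv_re_horizontal H₃).trans (deriv_im_vertical H₃).symm⟩
  · exact ⟨(deriv_re_vertical H₁).trans (congrArg _ (deriv_im_horizontal H₁)).symm,
      (deriv_re_vertical H₂).trans (congrArg _ (deriv_im_horizontal H₂)).symm,
      (deriv_re_vertical H₃).trans (congrArg _ (deriv_im_horizontal H₃)).symm⟩
  have hnull := weierstrass_data_isotropic (f (u + v * I)) (g (u + v * I))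
  generalize (1 / 2 : ℂ) * _ * _ = d₁ at H₁ hnull
  generalize I / 2 * _ * _ = d₂ at H₂ hnull
  generalize f _ * g _ = d₃ at H₃ hnull
  simp only [← exp_ofReal_neg_mul_I_mul_re]
  set w := cexp (↑(-t) * I)
  have hw : normSq w = 1 := by
    rw [normSq_eq_norm_sq, norm_exp_ofReal_mul_I, one_pow]
  rw [deriv_re_horizontal H₁, deriv_re_horizontal H₂, deriv_re_horizontal H₃,
    deriv_re_vertical H₁, deriv_re_vertical H₂, deriv_re_vertical H₃,
    deriv_re_horizontal (H₁.const_mul w), deriv_re_horizontal (H₂.const_mul w),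
    deriv_re_horizontal (H₃.const_mul w), deriv_re_vertical (H₁.const_mul w),
    deriv_re_vertical (H₂.const_mul w), deriv_re_vertical (H₃.const_mul w)]
  exact ⟨re_mul_re_add_mul_left_of_isotropic hnull hw,
    by linear_combination -re_mul_im_add_mul_left_of_isotropic hnull w,
    by linear_combination im_mul_im_add_mul_left_of_isotropic hnull hw⟩

/-- If `x` and `y` are the real and imaginary parts of a Weierstrass
minimal curve `Ψ = (Ψ₁, Ψ₂, Ψ₃)` generated by holomorphic `f, g`, then the
Cauchy–Riemann equations give `x_u = y_v`, `x_v = −y_u`, and every member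
`assoc_t = x cos t + y sin t` of the associated family has the same first
fundamental form coefficients as `x`. -/
theorem associated_family_same_first_fundamental_form
    (f g : ℂ → ℂ) (hf : Differentiable ℂ f) (hg : Differentiable ℂ g)
    (Ψ₁ Ψ₂ Ψ₃ : ℂ → ℂ)
    (hΨ₁ : ∀ z : ℂ, HasDerivAt Ψ₁ ((1 / 2 : ℂ) * f z * (1 - (g z) ^ 2)) z)
    (hΨ₂ : ∀ z : ℂ, HasDerivAt Ψ₂ ((Complex.I / 2) * f z * (1 + (g z) ^ 2)) z)
    (hΨ₃ : ∀ z : ℂ, HasDerivAt Ψ₃ (f z * g z) z)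
    -- the conjugate minimal surfaces `x = Re Ψ` and `y = Im Ψ`
    (x y : ℝ → ℝ → ℝ × ℝ × ℝ)
    (hx : ∀ u v : ℝ, x u v =
      ((Ψ₁ (u + v * Complex.I)).re, (Ψ₂ (u + v * Complex.I)).re,
        (Ψ₃ (u + v * Complex.I)).re))
    (hy : ∀ u v : ℝ, y u v =
      ((Ψ₁ (u + v * Complex.I)).im, (Ψ₂ (u + v * Complex.I)).im,
        (Ψ₃ (u + v * Complex.I)).im)) :
    ∀ u v : ℝ,
      -- Cauchy–Riemann equations, componentwise
      (deriv (fun s => (x s v).1) u = deriv (fun s => (y u s).1) v ∧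
       deriv (fun s => (x s v).2.1) u = deriv (fun s => (y u s).2.1) v ∧
       deriv (fun s => (x s v).2.2) u = deriv (fun s => (y u s).2.2) v) ∧
      (deriv (fun s => (x u s).1) v = -deriv (fun s => (y s v).1) u ∧
       deriv (fun s => (x u s).2.1) v = -deriv (fun s => (y s v).2.1) u ∧
       deriv (fun s => (x u s).2.2) v = -deriv (fun s => (y s v).2.2) u) ∧
      -- equality of first fundamental forms along the associated family
      (∀ t : ℝ,
        let assoc : ℝ → ℝ → ℝ × ℝ × ℝ := fun u v =>
          ((x u v).1 * Real.cos t + (y u v).1 * Real.sin t,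
           (x u v).2.1 * Real.cos t + (y u v).2.1 * Real.sin t,
           (x u v).2.2 * Real.cos t + (y u v).2.2 * Real.sin t)
        let ru : (ℝ → ℝ → ℝ × ℝ × ℝ) → ℝ × ℝ × ℝ := fun r =>
          (deriv (fun s => (r s v).1) u, deriv (fun s => (r s v).2.1) u,
            deriv (fun s => (r s v).2.2) u)
        let rv : (ℝ → ℝ → ℝ × ℝ × ℝ) → ℝ × ℝ × ℝ := fun r =>
          (deriv (fun s => (r u s).1) v, deriv (fun s => (r u s).2.1) v,
            deriv (fun s => (r u s).2.2) v)
        let dot : ℝ × ℝ × ℝ → ℝ × ℝ × ℝ → ℝ := fun p q =>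
          p.1 * q.1 + p.2.1 * q.2.1 + p.2.2 * q.2.2
        dot (ru assoc) (ru assoc) = dot (ru x) (ru x) ∧
        dot (ru assoc) (rv assoc) = dot (ru x) (rv x) ∧
        dot (rv assoc) (rv assoc) = dot (rv x) (rv x)) :=
  associated_family_same_first_fundamental_form_general f g Ψ₁ Ψ₂ Ψ₃ hΨ₁ hΨ₂ hΨ₃ x y hx hy
end

section
/- The function ν(u,v) = 8√3·c²/(2 + √3·c²(u²+v²))², where c > 0 is a constant, satisfies the Ganchev equation Δ(ln ν) + 2ν = 0 on ℝ². -/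
/-!
`8k / (2 + k(u² + v²))²` is the conformal factor of the unit sphere in the stereographic
coordinates rescaled by `√(k/2)`, and `Δ(ln ν) + 2ν = 0` says that the metric `ν (du² + dv²)`
has Gaussian curvature `1`. Concretely, `ln ν = ln (8k) - 2 ln D` with `D = 2 + k(u² + v²)`,
and `∂²_u ln D + ∂²_v ln D = 8k / D²`.
-/

open Real

/-- Euclidean Laplacian of a function of two real variables. -/
noncomputable def lap2 (f : ℝ → ℝ → ℝ) (u v : ℝ) : ℝ :=
  deriv (fun s => deriv (fun r => f r v) s) u +
    deriv (fun s => deriv (fun r => f u r) s) v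

noncomputable def sphericalFactor (k u v : ℝ) : ℝ :=
  8 * k / (2 + k * (u ^ 2 + v ^ 2)) ^ 2

lemma sphericalFactor_comm (k u v : ℝ) : sphericalFactor k u v = sphericalFactor k v u := by
  rw [sphericalFactor, sphericalFactor, add_comm (u ^ 2)]

lemma hasDerivAt_two_add_mul_sq_add_sq (k b s : ℝ) :
    HasDerivAt (fun r => 2 + k * (r ^ 2 + b ^ 2)) (2 * k * s) s := by
  refine ((((hasDerivAt_pow 2 s).add_const (b ^ 2)).const_mul k).const_add 2).congr_deriv ?_
  push_cast
  ring

section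

variable {k : ℝ}

lemma two_add_mul_sq_add_sq_pos (hk : 0 ≤ k) (u v : ℝ) : 0 < 2 + k * (u ^ 2 + v ^ 2) := by
  positivity

lemma log_sphericalFactor (hk : 0 < k) (u v : ℝ) :
    log (sphericalFactor k u v) = log (8 * k) - 2 * log (2 + k * (u ^ 2 + v ^ 2)) := by
  have hD := (two_add_mul_sq_add_sq_pos hk.le u v).ne'
  rw [sphericalFactor, log_div (by positivity) (pow_ne_zero 2 hD), log_pow]
  norm_num

lemma hasDerivAt_log_sphericalFactor_left (hk : 0 < k) (b s : ℝ) :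
    HasDerivAt (fun r => log (sphericalFactor k r b))
      (-(4 * k * s) / (2 + k * (s ^ 2 + b ^ 2))) s := by
  have hD := (two_add_mul_sq_add_sq_pos hk.le s b).ne'
  simp only [log_sphericalFactor hk]
  refine ((((hasDerivAt_two_add_mul_sq_add_sq k b s).log hD).const_mul 2).const_sub
    (log (8 * k))).congr_deriv ?_
  ring

lemma hasDerivAt_deriv_log_sphericalFactor_left (hk : 0 < k) (b s : ℝ) :
    HasDerivAt (deriv fun r => log (sphericalFactor k r b))
      (-(4 * k) * (2 + k * (b ^ 2 - s ^ 2)) / (2 + k * (s ^ 2 + b ^ 2)) ^ 2) s := by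
  have hD := (two_add_mul_sq_add_sq_pos hk.le s b).ne'
  rw [funext fun r => (hasDerivAt_log_sphericalFactor_left hk b r).deriv]
  refine (((hasDerivAt_id s).const_mul (4 * k)).neg.div
    (hasDerivAt_two_add_mul_sq_add_sq k b s) hD).congr_deriv ?_
  simp only [Pi.neg_apply, id]
  field_simp
  ring

lemma lap2_log_sphericalFactor (hk : 0 < k) (u v : ℝ) :
    lap2 (fun a b => log (sphericalFactor k a b)) u v = -2 * sphericalFactor k u v := by
  have hD := (two_add_mul_sq_add_sq_pos hk.le u v).ne'
  simp only [lap2, sphericalFactor_comm k u]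
  rw [(hasDerivAt_deriv_log_sphericalFactor_left hk v u).deriv,
    (hasDerivAt_deriv_log_sphericalFactor_left hk u v).deriv, sphericalFactor,
    add_comm (v ^ 2)]
  field_simp
  ring

end

/-- the function `ν(u,v) = 8√3·c²/(2 + √3·c²(u²+v²))²` with `c > 0`
satisfies the Ganchev equation `Δ(ln ν) + 2ν = 0` on all of `ℝ²`. -/
theorem ganchev_solution (c : ℝ) (hc : 0 < c) :
    ∀ u v : ℝ,
      let ν : ℝ → ℝ → ℝ := fun u v =>
        8 * Real.sqrt 3 * c ^ 2 / (2 + Real.sqrt 3 * c ^ 2 * (u ^ 2 + v ^ 2)) ^ 2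
      lap2 (fun a b => Real.log (ν a b)) u v + 2 * ν u v = 0 := by
  intro u v ν
  have hν : ν = sphericalFactor (√3 * c ^ 2) := by
    funext a b
    simp only [ν, sphericalFactor]
    ring
  rw [hν, lap2_log_sphericalFactor (by positivity)]
  ring
end

section
/- Let α ∈ ℂ with α = a + ib, and define the matrix B with rows ((1−a²+b²)/(1+a²+b²), −2ab/(1+a²+b²), −2a/(1+a²+b²)), (−2ab/(1+a²+b²), (1+a²−b²)/(1+a²+b²), −2b/(1+a²+b²)), (2a/(1+a²+b²), 2b/(1+a²+b²), (1−a²−b²)/(1+a²+b²)). Then B is an orthogonal matrix with determinant 1. -/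
set_option maxHeartbeats 1600000 in

/-- for `α = a + ib`, the matrix `B` appearing in the rotation
realizing the Möbius transformation `g ↦ e^{iφ}(α+g)/(1−ᾱg)` is a special
orthogonal matrix: `Bᵀ B = 1` and `det B = 1`. -/
theorem rotation_matrix_B_special_orthogonal (a b : ℝ) :
    let B : Matrix (Fin 3) (Fin 3) ℝ :=
      !![(1 - a ^ 2 + b ^ 2) / (1 + a ^ 2 + b ^ 2),
          -(2 * a * b) / (1 + a ^ 2 + b ^ 2),
          -(2 * a) / (1 + a ^ 2 + b ^ 2);
        -(2 * a * b) / (1 + a ^ 2 + b ^ 2),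
          (1 + a ^ 2 - b ^ 2) / (1 + a ^ 2 + b ^ 2),
          -(2 * b) / (1 + a ^ 2 + b ^ 2);
        (2 * a) / (1 + a ^ 2 + b ^ 2),
          (2 * b) / (1 + a ^ 2 + b ^ 2),
          (1 - a ^ 2 - b ^ 2) / (1 + a ^ 2 + b ^ 2)]
    B.transpose * B = 1 ∧ B.det = 1 := by
  intro B
  have hd : (1 + a ^ 2 + b ^ 2) ≠ 0 := by positivity
  have ht : B.transpose =
      !![(1 - a ^ 2 + b ^ 2) / (1 + a ^ 2 + b ^ 2),
          -(2 * a * b) / (1 + a ^ 2 + b ^ 2),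
          (2 * a) / (1 + a ^ 2 + b ^ 2);
        -(2 * a * b) / (1 + a ^ 2 + b ^ 2),
          (1 + a ^ 2 - b ^ 2) / (1 + a ^ 2 + b ^ 2),
          (2 * b) / (1 + a ^ 2 + b ^ 2);
        -(2 * a) / (1 + a ^ 2 + b ^ 2),
          -(2 * b) / (1 + a ^ 2 + b ^ 2),
          (1 - a ^ 2 - b ^ 2) / (1 + a ^ 2 + b ^ 2)] := by
    ext i j
    fin_cases i <;> fin_cases j <;> rfl
  constructor
  · rw [ht]
    show (_ : Matrix (Fin 3) (Fin 3) ℝ) = 1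
    rw [Matrix.mul_fin_three, Matrix.one_fin_three]
    ext i j
    fin_cases i <;> fin_cases j <;>
      simp only [Matrix.cons_val', Matrix.cons_val_zero, Matrix.cons_val_one, Matrix.head_cons,
        Matrix.cons_val_two, Matrix.tail_cons, Matrix.vecHead, Matrix.vecTail, Matrix.of_apply,
        Matrix.empty_val', Matrix.cons_val_fin_one, Matrix.head_fin_const, Fin.mk_zero,
        Fin.mk_one, Function.comp_apply, Matrix.cons_val_succ, Fin.succ_zero_eq_one] <;>
      norm_num <;> (field_simp; ring)
  · show B.det = 1
    rw [Matrix.det_fin_three]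
    simp only [B, Matrix.cons_val', Matrix.cons_val_zero, Matrix.cons_val_one, Matrix.head_cons,
      Matrix.cons_val_two, Matrix.tail_cons, Matrix.vecHead, Matrix.vecTail, Matrix.of_apply,
      Matrix.empty_val', Matrix.cons_val_fin_one, Matrix.head_fin_const, Fin.mk_zero,
      Fin.mk_one, Function.comp_apply, Matrix.cons_val_succ, Fin.succ_zero_eq_one]
    field_simp
    ring
end

section
/- Define X₁(u,v) = a₁(u⁶ − 15u⁴v² + 15u²v⁴ − v⁶) + i₁(u² − v²), Y₁(u,v) = 2a₁(3u⁵v − 10u³v³ + 3uv⁵) − 2i₁uv, Z₁(u,v) = −2√6·√(2a₁i₁)·uv(u²−v²) for constants a₁, i₁ with a₁i₁ > 0, and r₁(u,v) = (X₁, Y₁, Z₁). Then r₁ is an isothermal parametrization: its first fundamental form satisfies E = G and F = 0. -/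
/-!
Write `z = u + v i`. The three coordinates of `r₁` are the real parts of the polynomials
`a₁ z⁶ + i₁ z²`, `-i (a₁ z⁶ - i₁ z²)` and `(i c / 2) z⁴` with `c = √6 √(2 a₁ i₁)`.
If `X = Re f` with `f` holomorphic, then `X_u - i X_v = f'(z)`, so
`(E - G) - 2 i F = ∑ₖ fₖ'(z)²`. For the three polynomials above this sum is
`(48 a₁ i₁ - 4 c²) z⁶`, which vanishes because `c² = 12 a₁ i₁`.
-/

open Complex

section RealPartPartials

variable {f : ℂ → ℂ} {f' : ℂ} {u v : ℝ}

theorem HasDerivAt.hasDerivAt_re_comp_add_mul_I_left (hf : HasDerivAt f f' (u + v * I)) :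
    HasDerivAt (fun s : ℝ => (f (s + v * I)).re) f'.re u :=
  (hf.comp_add_const (u : ℂ) _).real_of_complex

theorem HasDerivAt.hasDerivAt_re_comp_add_mul_I_right (hf : HasDerivAt f f' (u + v * I)) :
    HasDerivAt (fun s : ℝ => (f (u + s * I)).re) (-f'.im) v := by
  have hline : HasDerivAt (fun s : ℂ => u + s * I) I v := by
    simpa using ((hasDerivAt_id (v : ℂ)).mul_const I).const_add (u : ℂ)
  simpa using (hf.comp (v : ℂ) hline).real_of_complex

end RealPartPartials

def IsIsothermalAt (r : ℝ → ℝ → ℝ × ℝ × ℝ) (u v : ℝ) : Prop :=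
  let ru : ℝ × ℝ × ℝ :=
    (deriv (fun s => (r s v).1) u, deriv (fun s => (r s v).2.1) u,
      deriv (fun s => (r s v).2.2) u)
  let rv : ℝ × ℝ × ℝ :=
    (deriv (fun s => (r u s).1) v, deriv (fun s => (r u s).2.1) v,
      deriv (fun s => (r u s).2.2) v)
  let E := ru.1 * ru.1 + ru.2.1 * ru.2.1 + ru.2.2 * ru.2.2
  let F := ru.1 * rv.1 + ru.2.1 * rv.2.1 + ru.2.2 * rv.2.2
  let G := rv.1 * rv.1 + rv.2.1 * rv.2.1 + rv.2.2 * rv.2.2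
  E = G ∧ F = 0

theorem isIsothermalAt_of_re {r : ℝ → ℝ → ℝ × ℝ × ℝ} {f g h : ℂ → ℂ} {f' g' h' : ℂ} {u v : ℝ}
    (hr : ∀ s t : ℝ, r s t = ((f (s + t * I)).re, (g (s + t * I)).re, (h (s + t * I)).re))
    (hf : HasDerivAt f f' (u + v * I)) (hg : HasDerivAt g g' (u + v * I))
    (hh : HasDerivAt h h' (u + v * I)) (hsum : f' ^ 2 + g' ^ 2 + h' ^ 2 = 0) :
    IsIsothermalAt r u v := by
  simp only [IsIsothermalAt, hr,
    hf.hasDerivAt_re_comp_add_mul_I_left.deriv, hf.hasDerivAt_re_comp_add_mul_I_right.deriv,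
    hg.hasDerivAt_re_comp_add_mul_I_left.deriv, hg.hasDerivAt_re_comp_add_mul_I_right.deriv,
    hh.hasDerivAt_re_comp_add_mul_I_left.deriv, hh.hasDerivAt_re_comp_add_mul_I_right.deriv]
  have hre := congrArg re hsum
  have him := congrArg im hsum
  simp only [sq, add_re, add_im, mul_re, mul_im, zero_re, zero_im] at hre him
  constructor <;> linarith

/-- the degree-6 polynomial chart `r₁[a₁,i₁]` (with `a₁i₁ > 0`)
is an isothermal parametrization: `E = G` and `F = 0`. -/
theorem r1_isothermal (a₁ i₁ : ℝ) (h : 0 < a₁ * i₁) :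
    ∀ u v : ℝ,
      let r : ℝ → ℝ → ℝ × ℝ × ℝ := fun u v =>
        (a₁ * (u ^ 6 - 15 * u ^ 4 * v ^ 2 + 15 * u ^ 2 * v ^ 4 - v ^ 6) +
            i₁ * (u ^ 2 - v ^ 2),
          2 * a₁ * (3 * u ^ 5 * v - 10 * u ^ 3 * v ^ 3 + 3 * u * v ^ 5) -
            2 * i₁ * u * v,
          -2 * Real.sqrt 6 * Real.sqrt (2 * a₁ * i₁) * u * v * (u ^ 2 - v ^ 2))
      let ru : ℝ × ℝ × ℝ :=
        (deriv (fun s => (r s v).1) u, deriv (fun s => (r s v).2.1) u,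
          deriv (fun s => (r s v).2.2) u)
      let rv : ℝ × ℝ × ℝ :=
        (deriv (fun s => (r u s).1) v, deriv (fun s => (r u s).2.1) v,
          deriv (fun s => (r u s).2.2) v)
      let E := ru.1 * ru.1 + ru.2.1 * ru.2.1 + ru.2.2 * ru.2.2
      let F := ru.1 * rv.1 + ru.2.1 * rv.2.1 + ru.2.2 * rv.2.2
      let G := rv.1 * rv.1 + rv.2.1 * rv.2.1 + rv.2.2 * rv.2.2
      E = G ∧ F = 0 := by
  intro u v r
  change IsIsothermalAt r u v
  set c : ℝ := √6 * √(2 * a₁ * i₁) with hc_def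
  have hc : (c : ℂ) ^ 2 = 12 * (a₁ * i₁) := by
    rw [← ofReal_pow, hc_def, mul_pow, Real.sq_sqrt (by norm_num), Real.sq_sqrt (by linarith)]
    push_cast; ring
  refine isIsothermalAt_of_re (f := fun z => a₁ * z ^ 6 + i₁ * z ^ 2)
    (g := fun z => -I * (a₁ * z ^ 6 - i₁ * z ^ 2)) (h := fun z => I * (c / 2) * z ^ 4)
    (fun s t => ?_) (((hasDerivAt_pow 6 _).const_mul _).add ((hasDerivAt_pow 2 _).const_mul _))
    ((((hasDerivAt_pow 6 _).const_mul _).sub ((hasDerivAt_pow 2 _).const_mul _)).const_mul _)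
    ((hasDerivAt_pow 4 _).const_mul _) ?_
  · simp only [r, Prod.mk.injEq, pow_succ, pow_zero, one_mul, mul_re, mul_im, add_re, add_im,
      sub_re, sub_im, neg_re, neg_im, ofReal_re, ofReal_im, I_re, I_im, div_ofNat_re, div_ofNat_im]
    exact ⟨by ring, by ring, by ring⟩
  · generalize (u : ℂ) + v * I = z
    norm_num only
    linear_combination ((6 * a₁ * z ^ 5 - 2 * i₁ * z) ^ 2 + 4 * c ^ 2 * z ^ 6) * I_sq - 4 * z ^ 6 * hc
end

section
/- With r₁[a₁,i₁](u,v) as above (a₁i₁ > 0), the mean curvature of r₁ vanishes identically: E·N − 2F·M + G·L = 0 at every regular point, where (E,F,G) and (L,M,N) are the first and second fundamental form coefficients. -/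
set_option maxRecDepth 100000
set_option maxHeartbeats 1600000

lemma dp (c0 c1 c2 c3 c4 c5 c6 : ℝ) :
    (deriv fun x : ℝ => c0 + c1*x + c2*x^2 + c3*x^3 + c4*x^4 + c5*x^5 + c6*x^6)
      = fun x => c1 + 2*c2*x + 3*c3*x^2 + 4*c4*x^3 + 5*c5*x^4 + 6*c6*x^5 := by
  funext s
  have H1 : HasDerivAt (fun x : ℝ => c0 + c1*x^1 + c2*x^2 + c3*x^3 + c4*x^4 + c5*x^5 + c6*x^6)
      (0 + c1*(((1:ℕ):ℝ)*s^0) + c2*(((2:ℕ):ℝ)*s^1) + c3*(((3:ℕ):ℝ)*s^2) + c4*(((4:ℕ):ℝ)*s^3)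
        + c5*(((5:ℕ):ℝ)*s^4) + c6*(((6:ℕ):ℝ)*s^5)) s :=
    (((((((hasDerivAt_const s c0).add ((hasDerivAt_pow 1 s).const_mul c1)).add
      ((hasDerivAt_pow 2 s).const_mul c2)).add ((hasDerivAt_pow 3 s).const_mul c3)).add
      ((hasDerivAt_pow 4 s).const_mul c4)).add ((hasDerivAt_pow 5 s).const_mul c5)).add
      ((hasDerivAt_pow 6 s).const_mul c6))
  have h2 : (fun x : ℝ => c0 + c1*x + c2*x^2 + c3*x^3 + c4*x^4 + c5*x^5 + c6*x^6)
      = (fun x : ℝ => c0 + c1*x^1 + c2*x^2 + c3*x^3 + c4*x^4 + c5*x^5 + c6*x^6) := by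
    funext x; ring
  rw [h2, H1.deriv]; push_cast; ring


/-- Dot product on `ℝ³`. -/
def dot3 (p q : ℝ × ℝ × ℝ) : ℝ := p.1 * q.1 + p.2.1 * q.2.1 + p.2.2 * q.2.2

/-- Cross product on `ℝ³`. -/
def cross3 (p q : ℝ × ℝ × ℝ) : ℝ × ℝ × ℝ :=
  (p.2.1 * q.2.2 - p.2.2 * q.2.1, p.2.2 * q.1 - p.1 * q.2.2,
    p.1 * q.2.1 - p.2.1 * q.1)

/-- the chart `r₁[a₁,i₁]` (with `a₁i₁ > 0`) has identically
vanishing mean curvature: `E·N − 2F·M + G·L = 0` at every regular point. -/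
theorem r1_minimal (a₁ i₁ : ℝ) (h : 0 < a₁ * i₁) :
    ∀ u v : ℝ,
      let r : ℝ → ℝ → ℝ × ℝ × ℝ := fun u v =>
        (a₁ * (u ^ 6 - 15 * u ^ 4 * v ^ 2 + 15 * u ^ 2 * v ^ 4 - v ^ 6) +
            i₁ * (u ^ 2 - v ^ 2),
          2 * a₁ * (3 * u ^ 5 * v - 10 * u ^ 3 * v ^ 3 + 3 * u * v ^ 5) -
            2 * i₁ * u * v,
          -2 * Real.sqrt 6 * Real.sqrt (2 * a₁ * i₁) * u * v * (u ^ 2 - v ^ 2))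
      let ru : ℝ × ℝ × ℝ :=
        (deriv (fun s => (r s v).1) u, deriv (fun s => (r s v).2.1) u,
          deriv (fun s => (r s v).2.2) u)
      let rv : ℝ × ℝ × ℝ :=
        (deriv (fun s => (r u s).1) v, deriv (fun s => (r u s).2.1) v,
          deriv (fun s => (r u s).2.2) v)
      let ruu : ℝ × ℝ × ℝ :=
        (deriv (fun s => deriv (fun q => (r q v).1) s) u,
          deriv (fun s => deriv (fun q => (r q v).2.1) s) u,
          deriv (fun s => deriv (fun q => (r q v).2.2) s) u)
      let ruv : ℝ × ℝ × ℝ :=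
        (deriv (fun s => deriv (fun q => (r q s).1) u) v,
          deriv (fun s => deriv (fun q => (r q s).2.1) u) v,
          deriv (fun s => deriv (fun q => (r q s).2.2) u) v)
      let rvv : ℝ × ℝ × ℝ :=
        (deriv (fun s => deriv (fun q => (r u q).1) s) v,
          deriv (fun s => deriv (fun q => (r u q).2.1) s) v,
          deriv (fun s => deriv (fun q => (r u q).2.2) s) v)
      let c := cross3 ru rv
      let n : ℝ × ℝ × ℝ :=
        (c.1 / Real.sqrt (dot3 c c), c.2.1 / Real.sqrt (dot3 c c),
          c.2.2 / Real.sqrt (dot3 c c))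
      let E := dot3 ru ru
      let F := dot3 ru rv
      let G := dot3 rv rv
      let L := dot3 n ruu
      let M := dot3 n ruv
      let N := dot3 n rvv
      c ≠ 0 → E * N - 2 * F * M + G * L = 0 := by
  intro u v
  intro r ru rv ruu ruv rvv c n E F G L M N hc
  have hd1 : ∀ p q : ℝ, deriv (fun s => (r s q).1) p = 2*i₁*p + 30*a₁*p*q^4 - 60*a₁*p^3*q^2 + 6*a₁*p^5 := by
    intro p q
    have e : (fun s => (r s q).1) = fun x : ℝ => (-i₁*q^2 - a₁*q^6) + (0)*x + (i₁ + 15*a₁*q^4)*x^2 + (0)*x^3 + (-15*a₁*q^2)*x^4 + (0)*x^5 + (a₁)*x^6 := by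
      funext x; simp only [r]; ring
    rw [e]; simp only [dp]; ring
  have he1 : ∀ p q : ℝ, deriv (fun s => (r p s).1) q = -2*i₁*q - 6*a₁*q^5 + 60*a₁*p^2*q^3 - 30*a₁*p^4*q := by
    intro p q
    have e : (fun s => (r p s).1) = fun x : ℝ => (i₁*p^2 + a₁*p^6) + (0)*x + (-i₁ - 15*a₁*p^4)*x^2 + (0)*x^3 + (15*a₁*p^2)*x^4 + (0)*x^5 + (-a₁)*x^6 := by
      funext x; simp only [r]; ring
    rw [e]; simp only [dp]; ring
  have hd2 : ∀ p q : ℝ, deriv (fun s => (r s q).2.1) p = -2*i₁*q + 6*a₁*q^5 - 60*a₁*p^2*q^3 + 30*a₁*p^4*q := by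
    intro p q
    have e : (fun s => (r s q).2.1) = fun x : ℝ => (0) + (-2*i₁*q + 6*a₁*q^5)*x + (0)*x^2 + (-20*a₁*q^3)*x^3 + (0)*x^4 + (6*a₁*q)*x^5 + (0)*x^6 := by
      funext x; simp only [r]; ring
    rw [e]; simp only [dp]; ring
  have he2 : ∀ p q : ℝ, deriv (fun s => (r p s).2.1) q = -2*i₁*p + 30*a₁*p*q^4 - 60*a₁*p^3*q^2 + 6*a₁*p^5 := by
    intro p q
    have e : (fun s => (r p s).2.1) = fun x : ℝ => (0) + (-2*i₁*p + 6*a₁*p^5)*x + (0)*x^2 + (-20*a₁*p^3)*x^3 + (0)*x^4 + (6*a₁*p)*x^5 + (0)*x^6 := by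
      funext x; simp only [r]; ring
    rw [e]; simp only [dp]; ring
  have hd3 : ∀ p q : ℝ, deriv (fun s => (r s q).2.2) p = 2*(Real.sqrt 6 * Real.sqrt (2 * a₁ * i₁))*q^3 - 6*(Real.sqrt 6 * Real.sqrt (2 * a₁ * i₁))*p^2*q := by
    intro p q
    have e : (fun s => (r s q).2.2) = fun x : ℝ => (0) + (2*(Real.sqrt 6 * Real.sqrt (2 * a₁ * i₁))*q^3)*x + (0)*x^2 + (-2*(Real.sqrt 6 * Real.sqrt (2 * a₁ * i₁))*q)*x^3 + (0)*x^4 + (0)*x^5 + (0)*x^6 := by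
      funext x; simp only [r]; ring
    rw [e]; simp only [dp]; ring
  have he3 : ∀ p q : ℝ, deriv (fun s => (r p s).2.2) q = 6*(Real.sqrt 6 * Real.sqrt (2 * a₁ * i₁))*p*q^2 - 2*(Real.sqrt 6 * Real.sqrt (2 * a₁ * i₁))*p^3 := by
    intro p q
    have e : (fun s => (r p s).2.2) = fun x : ℝ => (0) + (-2*(Real.sqrt 6 * Real.sqrt (2 * a₁ * i₁))*p^3)*x + (0)*x^2 + (2*(Real.sqrt 6 * Real.sqrt (2 * a₁ * i₁))*p)*x^3 + (0)*x^4 + (0)*x^5 + (0)*x^6 := by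
      funext x; simp only [r]; ring
    rw [e]; simp only [dp]; ring
  have huu1 : deriv (fun s => deriv (fun q => (r q v).1) s) u = 2*i₁ + 30*a₁*v^4 - 180*a₁*u^2*v^2 + 30*a₁*u^4 := by
    have e : (fun s => deriv (fun q => (r q v).1) s) = fun x : ℝ => (0) + (2*i₁ + 30*a₁*v^4)*x + (0)*x^2 + (-60*a₁*v^2)*x^3 + (0)*x^4 + (6*a₁)*x^5 + (0)*x^6 := by
      funext s; rw [hd1 s v]; ring
    rw [e]; simp only [dp]; ring
  have huv1 : deriv (fun s => deriv (fun q => (r q s).1) u) v = 120*a₁*u*v^3 - 120*a₁*u^3*v := by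
    have e : (fun s => deriv (fun q => (r q s).1) u) = fun x : ℝ => (2*i₁*u + 6*a₁*u^5) + (0)*x + (-60*a₁*u^3)*x^2 + (0)*x^3 + (30*a₁*u)*x^4 + (0)*x^5 + (0)*x^6 := by
      funext s; rw [hd1 u s]; ring
    rw [e]; simp only [dp]; ring
  have hvv1 : deriv (fun s => deriv (fun q => (r u q).1) s) v = -2*i₁ - 30*a₁*v^4 + 180*a₁*u^2*v^2 - 30*a₁*u^4 := by
    have e : (fun s => deriv (fun q => (r u q).1) s) = fun x : ℝ => (0) + (-2*i₁ - 30*a₁*u^4)*x + (0)*x^2 + (60*a₁*u^2)*x^3 + (0)*x^4 + (-6*a₁)*x^5 + (0)*x^6 := by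
      funext s; rw [he1 u s]; ring
    rw [e]; simp only [dp]; ring
  have huu2 : deriv (fun s => deriv (fun q => (r q v).2.1) s) u = -120*a₁*u*v^3 + 120*a₁*u^3*v := by
    have e : (fun s => deriv (fun q => (r q v).2.1) s) = fun x : ℝ => (-2*i₁*v + 6*a₁*v^5) + (0)*x + (-60*a₁*v^3)*x^2 + (0)*x^3 + (30*a₁*v)*x^4 + (0)*x^5 + (0)*x^6 := by
      funext s; rw [hd2 s v]; ring
    rw [e]; simp only [dp]; ring
  have huv2 : deriv (fun s => deriv (fun q => (r q s).2.1) u) v = -2*i₁ + 30*a₁*v^4 - 180*a₁*u^2*v^2 + 30*a₁*u^4 := by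
    have e : (fun s => deriv (fun q => (r q s).2.1) u) = fun x : ℝ => (0) + (-2*i₁ + 30*a₁*u^4)*x + (0)*x^2 + (-60*a₁*u^2)*x^3 + (0)*x^4 + (6*a₁)*x^5 + (0)*x^6 := by
      funext s; rw [hd2 u s]; ring
    rw [e]; simp only [dp]; ring
  have hvv2 : deriv (fun s => deriv (fun q => (r u q).2.1) s) v = 120*a₁*u*v^3 - 120*a₁*u^3*v := by
    have e : (fun s => deriv (fun q => (r u q).2.1) s) = fun x : ℝ => (-2*i₁*u + 6*a₁*u^5) + (0)*x + (-60*a₁*u^3)*x^2 + (0)*x^3 + (30*a₁*u)*x^4 + (0)*x^5 + (0)*x^6 := by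
      funext s; rw [he2 u s]; ring
    rw [e]; simp only [dp]; ring
  have huu3 : deriv (fun s => deriv (fun q => (r q v).2.2) s) u = -12*(Real.sqrt 6 * Real.sqrt (2 * a₁ * i₁))*u*v := by
    have e : (fun s => deriv (fun q => (r q v).2.2) s) = fun x : ℝ => (2*(Real.sqrt 6 * Real.sqrt (2 * a₁ * i₁))*v^3) + (0)*x + (-6*(Real.sqrt 6 * Real.sqrt (2 * a₁ * i₁))*v)*x^2 + (0)*x^3 + (0)*x^4 + (0)*x^5 + (0)*x^6 := by
      funext s; rw [hd3 s v]; ring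
    rw [e]; simp only [dp]; ring
  have huv3 : deriv (fun s => deriv (fun q => (r q s).2.2) u) v = 6*(Real.sqrt 6 * Real.sqrt (2 * a₁ * i₁))*v^2 - 6*(Real.sqrt 6 * Real.sqrt (2 * a₁ * i₁))*u^2 := by
    have e : (fun s => deriv (fun q => (r q s).2.2) u) = fun x : ℝ => (0) + (-6*(Real.sqrt 6 * Real.sqrt (2 * a₁ * i₁))*u^2)*x + (0)*x^2 + (2*(Real.sqrt 6 * Real.sqrt (2 * a₁ * i₁)))*x^3 + (0)*x^4 + (0)*x^5 + (0)*x^6 := by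
      funext s; rw [hd3 u s]; ring
    rw [e]; simp only [dp]; ring
  have hvv3 : deriv (fun s => deriv (fun q => (r u q).2.2) s) v = 12*(Real.sqrt 6 * Real.sqrt (2 * a₁ * i₁))*u*v := by
    have e : (fun s => deriv (fun q => (r u q).2.2) s) = fun x : ℝ => (-2*(Real.sqrt 6 * Real.sqrt (2 * a₁ * i₁))*u^3) + (0)*x + (6*(Real.sqrt 6 * Real.sqrt (2 * a₁ * i₁))*u)*x^2 + (0)*x^3 + (0)*x^4 + (0)*x^5 + (0)*x^6 := by
      funext s; rw [he3 u s]; ring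
    rw [e]; simp only [dp]; ring

  have hK : (Real.sqrt 6 * Real.sqrt (2 * a₁ * i₁))^2 = 12 * a₁ * i₁ := by
    rw [mul_pow, Real.sq_sqrt (by norm_num : (0:ℝ) ≤ 6),
      Real.sq_sqrt (by nlinarith : (0:ℝ) ≤ 2 * a₁ * i₁)]
    ring
  have hL : L = dot3 c ruu / Real.sqrt (dot3 c c) := by
    simp only [L, n, dot3]; ring
  have hM : M = dot3 c ruv / Real.sqrt (dot3 c c) := by
    simp only [M, n, dot3]; ring
  have hN : N = dot3 c rvv / Real.sqrt (dot3 c c) := by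
    simp only [N, n, dot3]; ring
  have hru : ru = ((2*i₁*u + 30*a₁*u*v^4 - 60*a₁*u^3*v^2 + 6*a₁*u^5), (-2*i₁*v + 6*a₁*v^5 - 60*a₁*u^2*v^3 + 30*a₁*u^4*v), (2*(Real.sqrt 6 * Real.sqrt (2 * a₁ * i₁))*v^3 - 6*(Real.sqrt 6 * Real.sqrt (2 * a₁ * i₁))*u^2*v)) := by
    simp only [ru]; rw [hd1 u v, hd2 u v, hd3 u v]
  have hrv : rv = ((-2*i₁*v - 6*a₁*v^5 + 60*a₁*u^2*v^3 - 30*a₁*u^4*v), (-2*i₁*u + 30*a₁*u*v^4 - 60*a₁*u^3*v^2 + 6*a₁*u^5), (6*(Real.sqrt 6 * Real.sqrt (2 * a₁ * i₁))*u*v^2 - 2*(Real.sqrt 6 * Real.sqrt (2 * a₁ * i₁))*u^3)) := by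
    simp only [rv]; rw [he1 u v, he2 u v, he3 u v]
  have hruu : ruu = ((2*i₁ + 30*a₁*v^4 - 180*a₁*u^2*v^2 + 30*a₁*u^4), (-120*a₁*u*v^3 + 120*a₁*u^3*v), (-12*(Real.sqrt 6 * Real.sqrt (2 * a₁ * i₁))*u*v)) := by
    simp only [ruu]; rw [huu1, huu2, huu3]
  have hruv : ruv = ((120*a₁*u*v^3 - 120*a₁*u^3*v), (-2*i₁ + 30*a₁*v^4 - 180*a₁*u^2*v^2 + 30*a₁*u^4), (6*(Real.sqrt 6 * Real.sqrt (2 * a₁ * i₁))*v^2 - 6*(Real.sqrt 6 * Real.sqrt (2 * a₁ * i₁))*u^2)) := by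
    simp only [ruv]; rw [huv1, huv2, huv3]
  have hrvv : rvv = ((-2*i₁ - 30*a₁*v^4 + 180*a₁*u^2*v^2 - 30*a₁*u^4), (120*a₁*u*v^3 - 120*a₁*u^3*v), (12*(Real.sqrt 6 * Real.sqrt (2 * a₁ * i₁))*u*v)) := by
    simp only [rvv]; rw [hvv1, hvv2, hvv3]
  have hcc : c = cross3 ((2*i₁*u + 30*a₁*u*v^4 - 60*a₁*u^3*v^2 + 6*a₁*u^5), (-2*i₁*v + 6*a₁*v^5 - 60*a₁*u^2*v^3 + 30*a₁*u^4*v), (2*(Real.sqrt 6 * Real.sqrt (2 * a₁ * i₁))*v^3 - 6*(Real.sqrt 6 * Real.sqrt (2 * a₁ * i₁))*u^2*v)) ((-2*i₁*v - 6*a₁*v^5 + 60*a₁*u^2*v^3 - 30*a₁*u^4*v), (-2*i₁*u + 30*a₁*u*v^4 - 60*a₁*u^3*v^2 + 6*a₁*u^5), (6*(Real.sqrt 6 * Real.sqrt (2 * a₁ * i₁))*u*v^2 - 2*(Real.sqrt 6 * Real.sqrt (2 * a₁ * i₁))*u^3)) := by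
    simp only [c]; rw [hru, hrv]
  have key : E * dot3 c rvv - 2 * F * dot3 c ruv + G * dot3 c ruu = 0 := by
    simp only [E, F, G]
    rw [hru, hrv, hruu, hruv, hrvv, hcc]
    simp only [dot3, cross3]
    linear_combination (256*i₁^2*(Real.sqrt 6 * Real.sqrt (2 * a₁ * i₁))*u*v^9 + 512*i₁^2*(Real.sqrt 6 * Real.sqrt (2 * a₁ * i₁))*u^3*v^7 - 512*i₁^2*(Real.sqrt 6 * Real.sqrt (2 * a₁ * i₁))*u^7*v^3 - 256*i₁^2*(Real.sqrt 6 * Real.sqrt (2 * a₁ * i₁))*u^9*v + 1536*a₁*i₁*(Real.sqrt 6 * Real.sqrt (2 * a₁ * i₁))*u*v^13 + 6144*a₁*i₁*(Real.sqrt 6 * Real.sqrt (2 * a₁ * i₁))*u^3*v^11 + 7680*a₁*i₁*(Real.sqrt 6 * Real.sqrt (2 * a₁ * i₁))*u^5*v^9 - 7680*a₁*i₁*(Real.sqrt 6 * Real.sqrt (2 * a₁ * i₁))*u^9*v^5 - 6144*a₁*i₁*(Real.sqrt 6 * Real.sqrt (2 * a₁ * i₁))*u^11*v^3 - 1536*a₁*i₁*(Real.sqrt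 6 * Real.sqrt (2 * a₁ * i₁))*u^13*v + 2304*a₁^2*(Real.sqrt 6 * Real.sqrt (2 * a₁ * i₁))*u*v^17 + 13824*a₁^2*(Real.sqrt 6 * Real.sqrt (2 * a₁ * i₁))*u^3*v^15 + 32256*a₁^2*(Real.sqrt 6 * Real.sqrt (2 * a₁ * i₁))*u^5*v^13 + 32256*a₁^2*(Real.sqrt 6 * Real.sqrt (2 * a₁ * i₁))*u^7*v^11 - 32256*a₁^2*(Real.sqrt 6 * Real.sqrt (2 * a₁ * i₁))*u^11*v^7 - 32256*a₁^2*(Real.sqrt 6 * Real.sqrt (2 * a₁ * i₁))*u^13*v^5 - 13824*a₁^2*(Real.sqrt 6 * Real.sqrt (2 * a₁ * i₁))*u^15*v^3 - 2304*a₁^2*(Real.sqrt 6 * Real.sqrt (2 * a₁ * i₁))*u^17*v) * hK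
  have : E * N - 2 * F * M + G * L
      = (E * dot3 c rvv - 2 * F * dot3 c ruv + G * dot3 c ruu) / Real.sqrt (dot3 c c) := by
    rw [hL, hM, hN]; ring
  rw [this, key, zero_div]
end

section
/- Let Ψ(z) = (z²(i₁ + a₁z⁴), iz²(i₁ − a₁z⁴), i√(3a₁i₁)z⁴) with a₁i₁ > 0. Then Ψ is a null curve: Ψ'₁(z)² + Ψ'₂(z)² + Ψ'₃(z)² = 0 for all z ∈ ℂ. -/
open Complex

/-- the Weierstrass minimal curve
`Ψ(z) = (z²(i₁ + a₁z⁴), iz²(i₁ − a₁z⁴), i√(3a₁i₁)z⁴)` (with `a₁i₁ > 0`) is a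
null curve: the sum of squares of the components of `Ψ'` vanishes. -/
theorem psi_null_curve (a₁ i₁ : ℝ) (h : 0 < a₁ * i₁) :
    ∀ z : ℂ,
      (deriv (fun z : ℂ => z ^ 2 * ((i₁ : ℂ) + a₁ * z ^ 4)) z) ^ 2 +
      (deriv (fun z : ℂ => Complex.I * z ^ 2 * ((i₁ : ℂ) - a₁ * z ^ 4)) z) ^ 2 +
      (deriv (fun z : ℂ => Complex.I * (Real.sqrt (3 * a₁ * i₁) : ℝ) * z ^ 4) z) ^ 2
        = 0 := by
  intro z
  have key : ((Real.sqrt (3 * a₁ * i₁) : ℝ) : ℂ) ^ 2 = 3 * a₁ * i₁ := by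
    norm_cast
    rw [Real.sq_sqrt (by nlinarith)]
  have d1 : HasDerivAt (fun z : ℂ => z ^ 2 * ((i₁ : ℂ) + a₁ * z ^ 4)) _ z := (hasDerivAt_pow 2 z).mul
    (((hasDerivAt_pow 4 z).const_mul (a₁ : ℂ)).const_add (i₁ : ℂ))
  have d2 : HasDerivAt (fun z : ℂ => Complex.I * z ^ 2 * ((i₁ : ℂ) - a₁ * z ^ 4)) _ z := (((hasDerivAt_pow 2 z).const_mul Complex.I).mul
    (((hasDerivAt_pow 4 z).const_mul (a₁ : ℂ)).const_sub (i₁ : ℂ)))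
  have d3 := (hasDerivAt_pow 4 z).const_mul (Complex.I * (Real.sqrt (3 * a₁ * i₁) : ℝ))
  rw [d1.deriv, d2.deriv, d3.deriv]
  linear_combination (4*z^2*(i₁:ℂ)^2 - 24*z^6*i₁*a₁ + 16*z^6*((Real.sqrt (3*a₁*i₁) : ℝ):ℂ)^2 + 36*z^10*a₁^2) * Complex.I_sq - (16 * z ^ 6) * key
end

section
/- Let Ψ(z) = (z²(i₁ + a₁z⁴), iz²(i₁ − a₁z⁴), i√(3a₁i₁)z⁴) with a₁i₁ > 0, t ∈ ℝ, and let R_{t/2} denote rotation of ℂ³ about the third coordinate axis by angle t/2 (acting on the first two coordinates as a real rotation applied ℂ-linearly). Then e^{−it}·Ψ(z) = R_{t/2}( Ψ(e^{−it/4} z) ) for all z ∈ ℂ. -/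
open Complex

/-- for the Weierstrass minimal curve
`Ψ(z) = (z²(i₁ + a₁z⁴), iz²(i₁ − a₁z⁴), i√(3a₁i₁)z⁴)` (with `a₁i₁ > 0`) and any
real `t`, one has `e^{−it}·Ψ(z) = R_{t/2}(Ψ(e^{−it/4}z))`, where `R_{t/2}` is
the rotation by angle `t/2` about the third coordinate axis, applied
`ℂ`-linearly to the first two coordinates. -/
theorem assoc_is_rotated_reparametrization (a₁ i₁ : ℝ) (h : 0 < a₁ * i₁)
    (t : ℝ) :
    let Ψ : ℂ → ℂ × ℂ × ℂ := fun z =>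
      (z ^ 2 * ((i₁ : ℂ) + a₁ * z ^ 4),
        Complex.I * z ^ 2 * ((i₁ : ℂ) - a₁ * z ^ 4),
        Complex.I * (Real.sqrt (3 * a₁ * i₁) : ℝ) * z ^ 4)
    let R : ℂ × ℂ × ℂ → ℂ × ℂ × ℂ := fun p =>
      ((Real.cos (t / 2) : ℝ) * p.1 - (Real.sin (t / 2) : ℝ) * p.2.1,
        (Real.sin (t / 2) : ℝ) * p.1 + (Real.cos (t / 2) : ℝ) * p.2.1,
        p.2.2)
    ∀ z : ℂ,
      (Complex.exp (-Complex.I * t) * (Ψ z).1,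
        Complex.exp (-Complex.I * t) * (Ψ z).2.1,
        Complex.exp (-Complex.I * t) * (Ψ z).2.2) =
      R (Ψ (Complex.exp (-Complex.I * t / 4) * z)) := by
  intro Ψ R z
  simp only [Ψ, R]
  set v : ℂ := Complex.exp (-Complex.I * t / 4) with hv
  have hvne : v ≠ 0 := Complex.exp_ne_zero _
  have h2 : v ^ 2 = (Real.cos (t / 2) : ℂ) - (Real.sin (t / 2) : ℂ) * Complex.I := by
    rw [hv, ← Complex.exp_nat_mul]
    have e : (2 : ℕ) * (-Complex.I * t / 4) = (-(t / 2) : ℝ) * Complex.I := by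
      push_cast; ring
    rw [e, Complex.exp_mul_I, Complex.ofReal_neg, Complex.cos_neg, Complex.sin_neg]
    push_cast; ring
  have h2' : (v ^ 2)⁻¹ = (Real.cos (t / 2) : ℂ) + (Real.sin (t / 2) : ℂ) * Complex.I := by
    rw [hv, ← Complex.exp_nat_mul, ← Complex.exp_neg]
    have e : -((2 : ℕ) * (-Complex.I * t / 4)) = ((t / 2) : ℝ) * Complex.I := by
      push_cast; ring
    rw [e, Complex.exp_mul_I]
    push_cast; ring
  have h4 : Complex.exp (-Complex.I * t) = v ^ 4 := by
    rw [hv, ← Complex.exp_nat_mul]; congr 1; push_cast; ring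
  have hc : (Real.cos (t / 2) : ℂ) = (v ^ 2 + (v ^ 2)⁻¹) / 2 := by
    linear_combination (-h2 - h2') / 2
  have hs : (Real.sin (t / 2) : ℂ) = (v ^ 2 - (v ^ 2)⁻¹) * Complex.I / 2 := by
    linear_combination -(h2 - h2') * Complex.I / 2 + (Real.sin (t / 2) : ℂ) * Complex.I_sq
  refine Prod.ext ?_ (Prod.ext ?_ ?_)
  · rw [h4, hc, hs]
    field_simp
    ring_nf
    try simp only [Complex.I_sq]
    try ring
  · rw [h4, hc, hs]
    field_simp
    ring_nf
    try simp only [Complex.I_sq]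
    try ring
  · rw [h4]
    ring
end

section
/- The chart s₁[1,1](u,v) = (u⁶−15u⁴v²+15u²v⁴−v⁶ − (25/96)(u⁴−6u²v²+v⁴), 2uv(3u⁴−10u²v²+3v⁴) + (25/24)uv(u²−v²), u(u⁴−10u²v²+5v⁴)) is isothermal: E = G, F = 0. -/
lemma hd6 (a b c d e f g x : ℝ) :
    HasDerivAt (fun w : ℝ => a*w^6+b*w^5+c*w^4+d*w^3+e*w^2+f*w+g)
      (6*a*x^5+5*b*x^4+4*c*x^3+3*d*x^2+2*e*x+f) x := by
  have h := ((((((((hasDerivAt_pow 6 x).const_mul a).add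
    ((hasDerivAt_pow 5 x).const_mul b)).add
    ((hasDerivAt_pow 4 x).const_mul c)).add
    ((hasDerivAt_pow 3 x).const_mul d)).add
    ((hasDerivAt_pow 2 x).const_mul e)).add
    ((hasDerivAt_id x).const_mul f)).add_const g)
  refine HasDerivAt.congr_deriv h ?_
  push_cast
  ring

lemma deriv6 (a b c d e f g x : ℝ) (h : ℝ → ℝ)
    (hh : h = fun w : ℝ => a*w^6+b*w^5+c*w^4+d*w^3+e*w^2+f*w+g) :
    deriv h x = 6*a*x^5+5*b*x^4+4*c*x^3+3*d*x^2+2*e*x+f := by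
  rw [hh, (hd6 a b c d e f g x).deriv]

/-- the degree-6 polynomial chart `s₁[1,1]` is isothermal:
`E = G` and `F = 0`. -/
theorem s1_isothermal :
    ∀ u v : ℝ,
      let s : ℝ → ℝ → ℝ × ℝ × ℝ := fun u v =>
        (u ^ 6 - 15 * u ^ 4 * v ^ 2 + 15 * u ^ 2 * v ^ 4 - v ^ 6 -
            (25 / 96) * (u ^ 4 - 6 * u ^ 2 * v ^ 2 + v ^ 4),
          2 * u * v * (3 * u ^ 4 - 10 * u ^ 2 * v ^ 2 + 3 * v ^ 4) +
            (25 / 24) * u * v * (u ^ 2 - v ^ 2),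
          u * (u ^ 4 - 10 * u ^ 2 * v ^ 2 + 5 * v ^ 4))
      let su : ℝ × ℝ × ℝ :=
        (deriv (fun w => (s w v).1) u, deriv (fun w => (s w v).2.1) u,
          deriv (fun w => (s w v).2.2) u)
      let sv : ℝ × ℝ × ℝ :=
        (deriv (fun w => (s u w).1) v, deriv (fun w => (s u w).2.1) v,
          deriv (fun w => (s u w).2.2) v)
      let E := su.1 * su.1 + su.2.1 * su.2.1 + su.2.2 * su.2.2
      let F := su.1 * sv.1 + su.2.1 * sv.2.1 + su.2.2 * sv.2.2
      let G := sv.1 * sv.1 + sv.2.1 * sv.2.1 + sv.2.2 * sv.2.2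
      E = G ∧ F = 0 := by
  intro u v
  dsimp only
  rw [deriv6 1 0 (-15*v^2-25/96) 0 (15*v^4+25/16*v^2) 0 (-v^6-25/96*v^4) u _
      (funext fun w => by ring),
    deriv6 0 (6*v) 0 (-20*v^3+25/24*v) 0 (6*v^5-25/24*v^3) 0 u _
      (funext fun w => by ring),
    deriv6 0 1 0 (-10*v^2) 0 (5*v^4) 0 u _
      (funext fun w => by ring),
    deriv6 (-1) 0 (15*u^2-25/96) 0 (-15*u^4+25/16*u^2) 0 (u^6-25/96*u^4) v _
      (funext fun w => by ring),
    deriv6 0 (6*u) 0 (-20*u^3-25/24*u) 0 (6*u^5+25/24*u^3) 0 v _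
      (funext fun w => by ring),
    deriv6 0 0 (5*u) 0 (-10*u^3) 0 (u^5) v _
      (funext fun w => by ring)]
  constructor <;> ring
end
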